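/- arXiv:2007.04698 — 2 statements merged into one kernel-verified Lean document; each statement's English description precedes it below -/
import Mathlib

section
/- Every chordal graph that is not a complete graph contains two non-adjacent simplicial vertices. -/
open SimpleGraph

/-- A graph is chordal if every cycle of length at least 4 has a chord:
an edge between two vertices of the cycle that is not an edge of the cycle. -/
def Chordal {V : Type*} (G : SimpleGraph V) : Prop :=
  ∀ ⦃v : V⦄ (c : G.Walk v v), c.IsCycle → 4 ≤ c.length →
    ∃ x y, x ∈ c.support ∧ y ∈ c.support ∧ G.Adj x y ∧ s(x, y) ∉ c.edges

/-- The underlying relation of the `k`-sun: `Sum.inr` vertices form the clique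
`{y_1, …, y_k}`, `Sum.inl` vertices form the independent set `{x_1, …, x_k}`,
and `x_i` is adjacent exactly to `y_i` and `y_{(i mod k)+1}`. -/
def sunRel (k : ℕ) : (Fin k ⊕ Fin k) → (Fin k ⊕ Fin k) → Prop
  | Sum.inr _, Sum.inr _ => True
  | Sum.inl i, Sum.inr j => j.val = i.val ∨ j.val = (i.val + 1) % k
  | _, _ => False

/-- The `k`-sun graph. -/
def sunGraph (k : ℕ) : SimpleGraph (Fin k ⊕ Fin k) := SimpleGraph.fromRel (sunRel k)

/-- A graph is strongly chordal if it is chordal and has no induced `k`-sun for `k ≥ 3`. -/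
def StronglyChordal {V : Type*} (G : SimpleGraph V) : Prop :=
  Chordal G ∧ ∀ k, 3 ≤ k → IsEmpty (sunGraph k ↪g G)

/-- The graph obtained from `G` by adding a universal vertex (`none`). -/
def addUniversal {V : Type*} (G : SimpleGraph V) : SimpleGraph (Option V) :=
  SimpleGraph.fromRel (fun x y =>
    match x, y with
    | some a, some b => G.Adj a b
    | _, _ => True)

/-- The graph obtained from `G` by adding a true twin (`none`) of the vertex `u`. -/
def addTwin {V : Type*} (G : SimpleGraph V) (u : V) : SimpleGraph (Option V) :=
  SimpleGraph.fromRel (fun x y =>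
    match x, y with
    | some a, some b => G.Adj a b
    | none, some a => a = u ∨ G.Adj u a
    | some a, none => a = u ∨ G.Adj u a
    | none, none => False)

/-- A vertex is simplicial if its neighborhood is a clique. -/
def IsSimplicial {V : Type*} (G : SimpleGraph V) (v : V) : Prop :=
  ∀ ⦃a b : V⦄, G.Adj v a → G.Adj v b → a ≠ b → G.Adj a b

/-- `Q` is (the vertex set of) a connected component of `G − A`. -/
def IsCompOf {V : Type*} (G : SimpleGraph V) (A Q : Set V) : Prop :=
  Disjoint Q A ∧ (G.induce Q).Connected ∧
    ∀ a ∈ Q, ∀ b, b ∉ A → G.Adj a b → b ∈ Q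

/-- The set of neighbors of a vertex set `Q`: vertices outside `Q` adjacent to some
vertex of `Q`. -/
def setNbhd {V : Type*} (G : SimpleGraph V) (Q : Set V) : Set V :=
  {b | b ∉ Q ∧ ∃ a ∈ Q, G.Adj a b}

/-- A cycle `c` is extendable if there is a cycle whose vertex set consists of the
vertices of `c` together with exactly one additional vertex. -/
def CycleExtendable {V : Type*} (G : SimpleGraph V) {v : V} (c : G.Walk v v) : Prop :=
  ∃ (w : V) (u : V) (c' : G.Walk u u), c'.IsCycle ∧ w ∉ c.support ∧
    ∀ y, y ∈ c'.support ↔ (y ∈ c.support ∨ y = w)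

/-! Dirac's argument. For non-adjacent `a`, `b`, let `C` be the component of `b` in `G - N[a]`
and `S` the set of neighbours of `a` adjacent to `C`; `S` separates `C` from `a`. Two vertices
`s`, `t` of `S` are joined by a chordless path through `C`, which `a` closes into a cycle whose
only possible chord is `st`, so `S` is a clique. By induction, the graphs induced on
`C ∪ S` and on the complement of `C` each have a simplicial vertex off the clique `S`; its
neighbourhood stays on its own side, so it is simplicial in `G`, and two such vertices on
opposite sides are non-adjacent. -/

namespace SimpleGraph.Walk

variable {V W : Type*} {G : SimpleGraph V} {H : SimpleGraph W} {u v x y : V}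

theorem exists_isSubwalk_of_mem_support (p : G.Walk u v) (hx : x ∈ p.support)
    (hy : y ∈ p.support) :
    (∃ q : G.Walk x y, q.IsSubwalk p) ∨ ∃ q : G.Walk y x, q.IsSubwalk p := by
  classical
  have hsplit := (p.take_spec hx).symm
  rw [← p.take_spec hx, mem_support_append_iff] at hy
  rcases hy with hy | hy
  · exact .inr ⟨_, (isSubwalk_of_append_right ((p.takeUntil x hx).take_spec hy).symm).trans
      (isSubwalk_of_append_left hsplit)⟩
  · exact .inl ⟨_, (isSubwalk_of_append_left ((p.dropUntil x hx).take_spec hy).symm).trans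
      (isSubwalk_of_append_right hsplit)⟩

theorem mem_edges_of_length_eq_one {p : G.Walk u v} (hp : p.length = 1) : s(u, v) ∈ p.edges := by
  rcases p with _ | ⟨_, _ | ⟨_, _⟩⟩ <;> simp_all

theorem isChordless_of_length_eq_dist {p : G.Walk u v} (hp : p.length = G.dist u v) :
    p.IsChordless := by
  refine isChordless_iff_forall_mem_edges.mpr fun x y hx hy hxy => ?_
  have edge_mem {a b : V} (q : G.Walk a b) (hq : q.IsSubwalk p) (hab : G.Adj a b) :
      s(a, b) ∈ p.edges := by
    have hlen : q.length = 1 :=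
      (length_eq_dist_of_subwalk hp hq).trans (dist_eq_one_iff_adj.mpr hab)
    exact hq.edges_subset (mem_edges_of_length_eq_one hlen)
  rcases p.exists_isSubwalk_of_mem_support hx hy with ⟨q, hq⟩ | ⟨q, hq⟩
  · exact edge_mem q hq hxy
  · exact Sym2.eq_swap ▸ edge_mem q hq hxy.symm

theorem IsChordless.map (f : G ↪g H) {p : G.Walk u v} (hp : p.IsChordless) :
    (p.map f.toHom).IsChordless := by
  refine isChordless_iff_forall_mem_edges.mpr fun x y hx hy hxy => ?_
  simp only [support_map, List.mem_map] at hx hy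
  obtain ⟨x, hx, rfl⟩ := hx
  obtain ⟨y, hy, rfl⟩ := hy
  rw [edges_map]
  exact List.mem_map_of_mem (hp.mem_edges hx hy (f.map_adj_iff.mp hxy))

theorem exists_isPath_isChordless_of_support_subset {s : Set V} (p : G.Walk u v)
    (hp : ∀ x ∈ p.support, x ∈ s) :
    ∃ q : G.Walk u v, q.IsPath ∧ q.IsChordless ∧ ∀ x ∈ q.support, x ∈ s := by
  obtain ⟨q, hq, hlen⟩ := (p.induce s hp).reachable.exists_path_of_dist
  refine ⟨q.map (Embedding.induce s).toHom, hq.map Subtype.val_injective,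
    (isChordless_of_length_eq_dist hlen).map _, fun x hx => ?_⟩
  obtain ⟨y, -, rfl⟩ := List.mem_map.mp (support_map _ q ▸ hx)
  exact y.2

end SimpleGraph.Walk

section Chordal

variable {V W : Type*} {G : SimpleGraph V} {H : SimpleGraph W}

theorem Chordal.comap (f : G ↪g H) (hH : Chordal H) : Chordal G := by
  intro v c hc hlen
  obtain ⟨x, y, hx, hy, hxy, hxyc⟩ :=
    hH (c.map f.toHom) (hc.map f.injective) (by simpa using hlen)
  rw [Walk.support_map, List.mem_map] at hx hy
  obtain ⟨x, hx, rfl⟩ := hx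
  obtain ⟨y, hy, rfl⟩ := hy
  refine ⟨x, y, hx, hy, f.map_adj_iff.mp hxy, fun h => hxyc ?_⟩
  rw [Walk.edges_map]
  exact List.mem_map_of_mem (f := Sym2.map f) h

theorem Chordal.exists_adj_of_isChordless (hG : Chordal G) {u v w : V} {p : G.Walk u v}
    (hp : p.IsPath) (hpc : p.IsChordless) (hne : u ≠ v) (huv : ¬ G.Adj u v)
    (hw : w ∉ p.support) (hwu : G.Adj w u) (hwv : G.Adj w v) :
    ∃ x ∈ p.support, x ≠ u ∧ x ≠ v ∧ G.Adj w x := by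
  set c := Walk.cons hwu (p.concat hwv.symm)
  have hc : c.IsCycle := by
    refine (Walk.cons_isCycle_iff _ _).mpr ⟨hp.concat hw _, fun h => ?_⟩
    rw [Walk.edges_concat, List.concat_eq_append, List.mem_append, List.mem_singleton] at h
    rcases h with h | h
    · exact hw (p.fst_mem_support_of_mem_edges h)
    · rcases Sym2.eq_iff.mp h with ⟨hwv', -⟩ | ⟨-, huv'⟩
      exacts [hwv.ne hwv', hne huv']
  have hlen : 4 ≤ c.length := by
    have h0 : p.length ≠ 0 := fun h => hne (Walk.eq_of_length_eq_zero h)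
    have h1 : p.length ≠ 1 := fun h => huv (Walk.adj_of_length_eq_one h)
    simp only [c, Walk.length_cons, Walk.length_concat]
    omega
  have mem_support {z : V} (hz : z ∈ c.support) : z = w ∨ z ∈ p.support := by
    simp only [c, Walk.support_cons, Walk.support_concat, List.mem_cons,
      List.mem_append] at hz
    tauto
  have chord_end {z : V} (hz : z ∈ p.support) (hwz : G.Adj w z) (hc : s(w, z) ∉ c.edges) :
      ∃ x ∈ p.support, x ≠ u ∧ x ≠ v ∧ G.Adj w x := by
    refine ⟨z, hz, ?_, ?_, hwz⟩ <;> rintro rfl <;> simp [c, Sym2.eq_swap] at hc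
  obtain ⟨x, y, hx, hy, hxy, hxyc⟩ := hG c hc hlen
  rcases mem_support hx with rfl | hxp <;> rcases mem_support hy with rfl | hyp
  · exact absurd rfl hxy.ne
  · exact chord_end hyp hxy hxyc
  · exact chord_end hxp hxy.symm (Sym2.eq_swap ▸ hxyc)
  · exact absurd (by simp [c, hpc.mem_edges hxp hyp hxy]) hxyc

theorem Chordal.adj_of_walk_outside_neighborSet (hG : Chordal G) {w s t : V} (hs : G.Adj w s)
    (ht : G.Adj w t) (hst : s ≠ t) (p : G.Walk s t)
    (hp : ∀ x ∈ p.support, x ≠ s → x ≠ t → x ≠ w ∧ ¬ G.Adj w x) : G.Adj s t := by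
  by_contra hnadj
  obtain ⟨q, hq, hqc, hqs⟩ := p.exists_isPath_isChordless_of_support_subset
    (s := {x | x ≠ s → x ≠ t → x ≠ w ∧ ¬ G.Adj w x}) hp
  have hw : w ∉ q.support := fun h => (hqs w h hs.ne ht.ne).1 rfl
  obtain ⟨x, hx, hxs, hxt, hwx⟩ := hG.exists_adj_of_isChordless hq hqc hst hnadj hw hs ht
  exact (hqs x hx hxs hxt).2 hwx

theorem Chordal.exists_isClique_separator (hG : Chordal G) {a b : V} (hab : a ≠ b)
    (h : ¬ G.Adj a b) :
    ∃ C S : Set V, b ∈ C ∧ a ∉ C ∧ a ∉ S ∧ Disjoint C S ∧ G.IsClique S ∧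
      ∀ x ∈ C, ∀ y, G.Adj x y → y ∈ C ∨ y ∈ S := by
  set K := {x | x ≠ a ∧ ¬ G.Adj a x}
  set C := {x | ∃ p : G.Walk b x, ∀ z ∈ p.support, z ∈ K}
  have hCK {x : V} (hx : x ∈ C) : x ∈ K := hx.elim fun p hp => hp x p.end_mem_support
  refine ⟨C, {s | G.Adj a s ∧ ∃ x ∈ C, G.Adj x s}, ⟨.nil, by simp [K, hab.symm, h]⟩,
    fun ha => (hCK ha).1 rfl, fun ha => ha.1.ne rfl,
    Set.disjoint_left.mpr fun x hx hS => (hCK hx).2 hS.1, ?_, ?_⟩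
  · rintro s ⟨has, x, ⟨p, hp⟩, hxs⟩ t ⟨hat, y, ⟨q, hq⟩, hyt⟩ hst
    refine hG.adj_of_walk_outside_neighborSet has hat hst
      (.cons hxs.symm ((p.reverse.append q).concat hyt)) fun z hz hzs hzt => ?_
    simp only [Walk.support_cons, Walk.support_concat, Walk.mem_support_append_iff,
      Walk.support_reverse, List.mem_cons, List.mem_append, List.mem_reverse, List.not_mem_nil,
      or_false] at hz
    rcases hz with rfl | (hz | hz) | rfl
    exacts [absurd rfl hzs, hp z hz, hq z hz, absurd rfl hzt]
  · rintro x ⟨p, hp⟩ y hxy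
    by_cases hy : y ∈ K
    · refine .inl ⟨p.concat hxy, fun z hz => ?_⟩
      rw [Walk.support_concat, List.mem_append, List.mem_singleton] at hz
      exact hz.elim (hp z) (· ▸ hy)
    · refine .inr ⟨?_, x, ⟨p, hp⟩, hxy⟩
      obtain rfl | hay : y = a ∨ G.Adj a y :=
        or_iff_not_imp_left.mpr fun hya => not_not.mp fun hn => hy ⟨hya, hn⟩
      exacts [absurd hxy.symm (hp x p.end_mem_support).2, hay]

theorem IsSimplicial.of_induce {s : Set V} {v : s} (hv : IsSimplicial (G.induce s) v)
    (hs : ∀ w, G.Adj v w → w ∈ s) : IsSimplicial G v :=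
  fun x y hx hy hxy => hv (a := ⟨x, hs x hx⟩) (b := ⟨y, hs y hy⟩) hx hy
    fun h => hxy (congrArg Subtype.val h)

theorem exists_isSimplicial_mem_diff_of_isClique {X S : Set V}
    (hX : ∀ ⦃a b : X⦄, a ≠ b → ¬ (G.induce X).Adj a b → ∃ u v : X, u ≠ v ∧
      ¬ (G.induce X).Adj u v ∧ IsSimplicial (G.induce X) u ∧ IsSimplicial (G.induce X) v)
    (hS : G.IsClique S) {x₀ : V} (hx₀ : x₀ ∈ X \ S)
    (hclosed : ∀ x ∈ X \ S, ∀ y, G.Adj x y → y ∈ X) :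
    ∃ u ∈ X \ S, IsSimplicial G u := by
  have lift {u : X} (hu : u.1 ∉ S) (h : IsSimplicial (G.induce X) u) :
      ∃ u ∈ X \ S, IsSimplicial G u :=
    ⟨u, ⟨u.2, hu⟩, h.of_induce (hclosed u ⟨u.2, hu⟩)⟩
  by_cases hcomplete : ∀ a b : X, a ≠ b → (G.induce X).Adj a b
  · exact lift (u := ⟨x₀, hx₀.1⟩) hx₀.2 fun a b _ _ hab => hcomplete a b hab
  push Not at hcomplete
  obtain ⟨a, b, hab, hnadj⟩ := hcomplete
  obtain ⟨u, v, huv, hnuv, hu, hv⟩ := hX hab hnadj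
  by_cases huS : u.1 ∈ S
  · by_cases hvS : v.1 ∈ S
    · exact absurd (hS huS hvS (Subtype.coe_ne_coe.mpr huv)) hnuv
    · exact lift hvS hv
  · exact lift huS hu

theorem Chordal.exists_isSimplicial_not_adj [Finite V] (hG : Chordal G) :
    ∀ ⦃a b : V⦄, a ≠ b → ¬ G.Adj a b →
      ∃ u v, u ≠ v ∧ ¬ G.Adj u v ∧ IsSimplicial G u ∧ IsSimplicial G v := by
  obtain ⟨n, hn⟩ : ∃ n, Nat.card V = n := ⟨_, rfl⟩
  induction n using Nat.strong_induction_on generalizing V with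
  | _ n ih =>
  intro a b hab h
  obtain ⟨C, S, hbC, haC, haS, hCS, hS, hC⟩ := hG.exists_isClique_separator hab h
  have induce_ih (X : Set V) {x : V} (hx : x ∉ X) :=
    ih _ (hn ▸ Finite.card_subtype_lt hx) (hG.comap (Embedding.induce X)) rfl
  obtain ⟨u, ⟨huCS, huS⟩, hsu⟩ := exists_isSimplicial_mem_diff_of_isClique
    (induce_ih (C ∪ S) (x := a) (by simp [haC, haS])) hS
    ⟨.inl hbC, Set.disjoint_left.mp hCS hbC⟩
    fun x hx y hxy => hC x (hx.1.resolve_right hx.2) y hxy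
  obtain ⟨v, ⟨hvC, hvS⟩, hsv⟩ := exists_isSimplicial_mem_diff_of_isClique
    (induce_ih Cᶜ (not_not.mpr hbC)) hS ⟨haC, haS⟩
    fun x hx y hxy hyC => (hC y hyC x hxy.symm).elim hx.1 hx.2
  have huC : u ∈ C := huCS.resolve_right huS
  exact ⟨u, v, ne_of_mem_of_not_mem huC hvC, fun huv => (hC u huC v huv).elim hvC hvS, hsu, hsv⟩

end Chordal

/-- Every chordal graph that is not complete contains two non-adjacent simplicial
vertices. -/
theorem stmt9 {V : Type*} [Fintype V] (G : SimpleGraph V) (hch : Chordal G)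
    (hnc : ¬ ∀ u v : V, u ≠ v → G.Adj u v) :
    ∃ u v : V, u ≠ v ∧ ¬ G.Adj u v ∧ IsSimplicial G u ∧ IsSimplicial G v := by
  push Not at hnc
  obtain ⟨a, b, hab, h⟩ := hnc
  exact hch.exists_isSimplicial_not_adj hab h
end

section
/- The graph Ĥ defined as follows is strongly chordal: take a path a–b–c–d–e–f–g on 7 vertices, add three universal vertices u₁, u₂, u₃ (adjacent to all of a,…,g and to each other), and then add five new vertices v₁,…,v₅ with edges v₁a, v₁u₂, v₂u₂, v₂g, v₃b, v₃u₃, v₄u₃, v₄f, v₅e, v₅u₁. -/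
open SimpleGraph

/-- The edges of the graph `Ĥ`: vertices `a,…,g` of the path are `0,…,6`, the
universal vertices `u₁,u₂,u₃` are `7,8,9`, and the vertices `v₁,…,v₅` are `10,…,14`. -/
def hhatEdges : List (ℕ × ℕ) :=
  [(0, 1), (1, 2), (2, 3), (3, 4), (4, 5), (5, 6),
   (7, 0), (7, 1), (7, 2), (7, 3), (7, 4), (7, 5), (7, 6),
   (8, 0), (8, 1), (8, 2), (8, 3), (8, 4), (8, 5), (8, 6),
   (9, 0), (9, 1), (9, 2), (9, 3), (9, 4), (9, 5), (9, 6),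
   (7, 8), (7, 9), (8, 9),
   (10, 0), (10, 8), (11, 8), (11, 6), (12, 1), (12, 9), (13, 9), (13, 5),
   (14, 4), (14, 7)]

/-- The graph `Ĥ`: a path `a b c d e f g`, three universal vertices `u₁, u₂, u₃`,
and five degree-2 vertices `v₁,…,v₅` with the heavy edges
`v₁a, v₁u₂, v₂u₂, v₂g, v₃b, v₃u₃, v₄u₃, v₄f, v₅e, v₅u₁`. -/
def Hhat : SimpleGraph (Fin 15) :=
  SimpleGraph.fromRel (fun i j => (i.val, j.val) ∈ hhatEdges)

instance : DecidableRel Hhat.Adj := fun a b =>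
  inferInstanceAs (Decidable (a ≠ b ∧
    ((a.val, b.val) ∈ hhatEdges ∨ (b.val, a.val) ∈ hhatEdges)))

/-!
Ĥ has a simple elimination ordering in Farber's sense: v₁,…,v₅, then a,…,g, u₁, u₂, u₃, each
vertex being simple among the vertices not before it. Such an ordering forces strong chordality.
On a cycle of length at least 4, the two cycle-neighbours of the earliest vertex are adjacent and
give a chord. In a k-sun with k ≥ 3 no vertex is simple: the neighbours yᵢ, yᵢ₊₁ of xᵢ are
separated by xᵢ₋₁ and xᵢ₊₁, and the neighbours xᵢ₋₁, xᵢ of yᵢ by yᵢ₋₁ and yᵢ₊₁; so the earliest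
vertex of an induced sun cannot be simple.
-/

namespace Fin
variable {k : ℕ} [NeZero k]

lemma add_one_ne_self (hk : 2 ≤ k) (i : Fin k) : i + 1 ≠ i := by
  rw [ne_eq, add_eq_left, Fin.ext_iff]
  simp
  omega

lemma add_one_add_one_ne_self (hk : 3 ≤ k) (i : Fin k) : i + 1 + 1 ≠ i := by
  rw [add_assoc, ne_eq, add_eq_left, Fin.ext_iff]
  simp [Fin.val_add, Nat.mod_eq_of_lt (by omega : 2 < k)]

end Fin

open Sum

section Sun
variable {k : ℕ}

@[simp] lemma sunGraph_adj_inl_inr [NeZero k] {i j : Fin k} :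
    (sunGraph k).Adj (inl i) (inr j) ↔ j = i ∨ j = i + 1 := by
  simp [sunGraph, sunRel, Fin.ext_iff, Fin.val_add]

@[simp] lemma sunGraph_adj_inr_inl [NeZero k] {i j : Fin k} :
    (sunGraph k).Adj (inr j) (inl i) ↔ j = i ∨ j = i + 1 := by
  rw [SimpleGraph.adj_comm, sunGraph_adj_inl_inr]

end Sun

namespace SimpleGraph

namespace Walk
variable {V : Type*} {G : SimpleGraph V} {u : V}

lemma IsCycle.mk_snd_penultimate_notMem_edges {c : G.Walk u u} (hc : c.IsCycle)
    (hlen : 4 ≤ c.length) : s(c.snd, c.penultimate) ∉ c.edges := by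
  cases c with
  | nil => simp at hlen
  | cons h p =>
    rw [cons_isCycle_iff] at hc
    rw [length_cons] at hlen
    have hp : ¬p.Nil := not_nil_iff_lt_length.mpr (by omega)
    rw [snd_cons, penultimate_cons_of_not_nil _ _ hp, edges_cons, List.mem_cons]
    rintro (he | he)
    · rw [Sym2.eq_iff] at he
      grind [h.ne, (adj_penultimate hp).ne]
    · have := hc.1.getVert_injOn (by simp : p.length - 1 ∈ {i | i ≤ p.length})
        (by simp; omega : 1 ∈ {i | i ≤ p.length}) (hc.1.eq_snd_of_mem_edges he)
      omega

end Walk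

variable {V : Type*} (G : SimpleGraph V)

/-- `v` is simple in the subgraph induced on `S`: the closed neighbourhoods (within `S`) of the
neighbours of `v` in `S` form a chain under inclusion. -/
def IsSimpleOn (S : Set V) (v : V) : Prop :=
  ∀ ⦃a b⦄, a ∈ S → b ∈ S → G.Adj v a → G.Adj v b →
    (∀ w ∈ S, (w = a ∨ G.Adj a w) → w = b ∨ G.Adj b w) ∨
    (∀ w ∈ S, (w = b ∨ G.Adj b w) → w = a ∨ G.Adj a w)

def IsSimpleOrdering {α : Type*} [LinearOrder α] (r : V → α) : Prop :=
  ∀ v, G.IsSimpleOn {w | r v ≤ r w} v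

variable {G} {S : Set V} {v a b : V}

lemma IsSimpleOn.adj (h : G.IsSimpleOn S v) (ha : a ∈ S) (hb : b ∈ S) (hva : G.Adj v a)
    (hvb : G.Adj v b) (hab : a ≠ b) : G.Adj a b := by
  rcases h ha hb hva hvb with h | h
  · exact ((h a ha (.inl rfl)).resolve_left hab).symm
  · exact (h b hb (.inl rfl)).resolve_left hab.symm

lemma IsSimpleOn.closedNbhd_chain (h : G.IsSimpleOn S v) (ha : a ∈ S) (hb : b ∈ S)
    (hva : G.Adj v a) (hvb : G.Adj v b) {p q : V} (hp : p ∈ S) (hq : q ∈ S)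
    (hpa : p = a ∨ G.Adj a p) (hqb : q = b ∨ G.Adj b q) :
    (p = b ∨ G.Adj b p) ∨ (q = a ∨ G.Adj a q) :=
  (h ha hb hva hvb).imp (· p hp hpa) (· q hq hqb)

theorem not_isSimpleOn_sun_vertex {k : ℕ} (hk : 3 ≤ k) (f : sunGraph k ↪g G)
    (hS : ∀ s, f s ∈ S) (s : Fin k ⊕ Fin k) : ¬G.IsSimpleOn S (f s) := by
  have : NeZero k := ⟨by omega⟩
  have h1 := Fin.add_one_ne_self (by omega : 2 ≤ k)
  have h2 := Fin.add_one_add_one_ne_self hk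
  intro h
  obtain ⟨i, rfl | rfl⟩ : ∃ i, s = inl (i + 1) ∨ s = inr (i + 1) := by
    rcases s with j | j <;> exact ⟨j - 1, by simp⟩
  · have := h.closedNbhd_chain (hS (inr (i + 1))) (hS (inr (i + 1 + 1)))
      (f.map_adj_iff.mpr (by simp)) (f.map_adj_iff.mpr (by simp))
      (hS (inl i)) (hS (inl (i + 1 + 1))) (by simp) (by simp)
    simp [f.injective.eq_iff, h1, h2, (h1 _).symm, (h2 _).symm] at this
  · have := h.closedNbhd_chain (hS (inl i)) (hS (inl (i + 1)))
      (f.map_adj_iff.mpr (by simp)) (f.map_adj_iff.mpr (by simp))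
      (hS (inr i)) (hS (inr (i + 1 + 1))) (by simp) (by simp)
    simp [f.injective.eq_iff, h1, h2, (h1 _).symm, (h2 _).symm] at this

variable {α : Type*} [LinearOrder α] {r : V → α}

theorem IsSimpleOrdering.chordal (h : G.IsSimpleOrdering r) : Chordal G := by
  classical
  intro v c hc hlen
  obtain ⟨m, hm, hmin⟩ := c.support.toFinset.exists_min_image r ⟨v, by simp⟩
  rw [List.mem_toFinset] at hm
  set c' := c.rotate m hm
  have hc' : c'.IsCycle := hc.rotate hm
  have hnil : ¬c'.Nil := hc'.not_nil
  have hmem : ∀ i, c'.getVert i ∈ c.support := fun i =>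
    (c.mem_support_rotate_iff m hm).mp (c'.getVert_mem_support i)
  refine ⟨c'.snd, c'.penultimate, hmem _, hmem _, ?_, fun he => ?_⟩
  · exact (h m).adj (hmin _ (List.mem_toFinset.mpr (hmem _)))
      (hmin _ (List.mem_toFinset.mpr (hmem _))) (c'.adj_snd hnil)
      (c'.adj_penultimate hnil).symm hc'.snd_ne_penultimate
  · exact hc'.mk_snd_penultimate_notMem_edges (by simpa [c'] using hlen)
      ((c.rotate_edges m hm).perm.mem_iff.mpr he)

theorem IsSimpleOrdering.isEmpty_sunGraph_embedding (h : G.IsSimpleOrdering r) {k : ℕ}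
    (hk : 3 ≤ k) : IsEmpty (sunGraph k ↪g G) := by
  refine ⟨fun f => ?_⟩
  have : Nonempty (Fin k ⊕ Fin k) := ⟨inl ⟨0, by omega⟩⟩
  obtain ⟨s, hs⟩ := Finite.exists_min (r ∘ f)
  exact not_isSimpleOn_sun_vertex hk f hs s (h (f s))

theorem IsSimpleOrdering.stronglyChordal (h : G.IsSimpleOrdering r) : StronglyChordal G :=
  ⟨h.chordal, fun _ => h.isEmpty_sunGraph_embedding⟩

end SimpleGraph

def hhatRank (v : Fin 15) : ℕ := if 10 ≤ v.val then 0 else v.val + 1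

theorem hhat_isSimpleOrdering : Hhat.IsSimpleOrdering hhatRank := by
  unfold IsSimpleOrdering IsSimpleOn
  decide

/-- The graph `Ĥ` is strongly chordal. -/
theorem stmt15 : StronglyChordal Hhat :=
  hhat_isSimpleOrdering.stronglyChordal
end
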